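/- Let A be a reduced commutative Noetherian Jacobson ring, M a finite projective A-module, and N_1, N_2 ⊆ M two A-submodules which are direct summands of rank r. If for every maximal ideal m of A the images of N_1 and N_2 in M ⊗_A A/m coincide, then N_1 = N_2. -/

import Mathlib

/-!
Project `M` onto a complement of `N₂` along `N₂`. Equality of the fibres puts the image of `N₁`
in `m • M` for every maximal ideal `m`. A projective module embeds in a free one, where
`⋂ₘ m • M` is cut out coordinatewise by the Jacobson radical, which vanishes for a reduced
Jacobson ring; so the image of `N₁` is zero and `N₁ ≤ N₂`. Symmetrically `N₂ ≤ N₁`.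
-/

open scoped TensorProduct

/-- A submodule `N ≤ M` is a *direct summand of rank `r`* if it has a complement and is
projective of constant rank `r`. -/
def IsSummandOfRank (A : Type) [CommRing A] {M : Type} [AddCommGroup M] [Module A M]
    (N : Submodule A M) (r : ℕ) : Prop :=
  (∃ C : Submodule A M, IsCompl N C) ∧ Module.Projective A N ∧ Module.Finite A N ∧
    ∀ p : PrimeSpectrum A,
      Module.finrank (Localization.AtPrime p.asIdeal)
        (LocalizedModule p.asIdeal.primeCompl N) = r

open Submodule

theorem IsJacobsonRing.sInf_isMaximal_eq_bot (A : Type*) [CommRing A] [IsReduced A]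
    [IsJacobsonRing A] : sInf {m : Ideal A | m.IsMaximal} = ⊥ := by
  rw [← Ring.jacobson_eq_sInf_isMaximal, ← Ideal.jacobson_bot, ← Ideal.radical_eq_jacobson]
  exact nilradical_eq_zero A

theorem Finsupp.apply_mem_of_mem_smul_top {R ι : Type*} [CommSemiring R] (I : Ideal R)
    {f : ι →₀ R} (hf : f ∈ I • (⊤ : Submodule R (ι →₀ R))) (i : ι) : f i ∈ I := by
  simpa using smul_top_le_comap_smul_top I (Finsupp.lapply i) hf

theorem Module.Projective.biInf_smul_top_eq_bot {R M : Type*} [CommSemiring R] [AddCommMonoid M]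
    [Module R M] [Module.Projective R M] {S : Set (Ideal R)} (hS : sInf S = ⊥) :
    ⨅ I ∈ S, I • (⊤ : Submodule R M) = ⊥ := by
  obtain ⟨s, hs⟩ := Module.projective_def'.mp ‹Module.Projective R M›
  refine eq_bot_iff.2 fun x hx => ?_
  have hsx : s x = 0 := by
    ext j
    have : s x j ∈ sInf S := Ideal.mem_sInf.2 fun {I} hI =>
      Finsupp.apply_mem_of_mem_smul_top I
        (smul_top_le_comap_smul_top I s ((mem_iInf _).1 ((mem_iInf _).1 hx I) hI)) j
    simpa [hS] using this
  simpa [hsx] using (LinearMap.congr_fun hs x).symm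

theorem Submodule.le_of_forall_le_sup_smul_top {R M : Type*} [CommRing R] [AddCommGroup M]
    [Module R M] [Module.Projective R M] {S : Set (Ideal R)} (hS : sInf S = ⊥)
    {N₁ N₂ : Submodule R M} (hN₂ : ∃ C, IsCompl N₂ C)
    (h : ∀ I ∈ S, N₁ ≤ N₂ ⊔ I • ⊤) : N₁ ≤ N₂ := by
  obtain ⟨C, hC⟩ := hN₂
  set f := C.projection N₂ hC.symm
  have hker : LinearMap.ker f = N₂ := ker_projection hC.symm
  have : N₁.map f ≤ ⨅ I ∈ S, I • ⊤ := le_iInf₂ fun I hI => map_le_iff_le_comap.2 <|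
    (h I hI).trans <| sup_le (hker ▸ LinearMap.ker_le_comap f) (smul_top_le_comap_smul_top I f)
  rwa [Module.Projective.biInf_smul_top_eq_bot hS, le_bot_iff, ← LinearMap.le_ker_iff_map,
    hker] at this

theorem Submodule.le_sup_of_map_mkQ_le {R M : Type*} [Ring R] [AddCommGroup M] [Module R M]
    {N₁ N₂ P : Submodule R M} (h : N₁.map P.mkQ ≤ N₂.map P.mkQ) : N₁ ≤ N₂ ⊔ P := by
  rw [sup_comm, ← comap_map_mkQ]
  exact map_le_iff_le_comap.1 h

theorem summands_eq_of_equal_fibers_general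
    (A : Type) [CommRing A] [IsReduced A] [IsJacobsonRing A]
    (M : Type) [AddCommGroup M] [Module A M]
    [Module.Projective A M]
    (r : ℕ) (N₁ N₂ : Submodule A M)
    (h₁ : IsSummandOfRank A N₁ r) (h₂ : IsSummandOfRank A N₂ r)
    (hfib : ∀ (m : Ideal A) (_ : m.IsMaximal),
      N₁.map (Submodule.mkQ (m • (⊤ : Submodule A M))) =
        N₂.map (Submodule.mkQ (m • (⊤ : Submodule A M)))) :
    N₁ = N₂ := by
  have hmax := IsJacobsonRing.sInf_isMaximal_eq_bot A
  exact le_antisymm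
    (le_of_forall_le_sup_smul_top hmax h₂.1 fun m hm => le_sup_of_map_mkQ_le (hfib m hm).le)
    (le_of_forall_le_sup_smul_top hmax h₁.1 fun m hm => le_sup_of_map_mkQ_le (hfib m hm).ge)

/-- Let `A` be a reduced Noetherian Jacobson ring, `M` finite
projective over `A`, and `N₁, N₂ ⊆ M` direct summands of rank `r`.  If for every
maximal ideal `m` the images of `N₁` and `N₂` in `M ⊗_A A/m = M / mM` coincide, then
`N₁ = N₂`. -/
theorem summands_eq_of_equal_fibers
    (A : Type) [CommRing A] [IsNoetherianRing A] [IsReduced A] [IsJacobsonRing A]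
    (M : Type) [AddCommGroup M] [Module A M] [Module.Finite A M]
    [Module.Projective A M]
    (r : ℕ) (N₁ N₂ : Submodule A M)
    (h₁ : IsSummandOfRank A N₁ r) (h₂ : IsSummandOfRank A N₂ r)
    (hfib : ∀ (m : Ideal A) (_ : m.IsMaximal),
      N₁.map (Submodule.mkQ (m • (⊤ : Submodule A M))) =
        N₂.map (Submodule.mkQ (m • (⊤ : Submodule A M)))) :
    N₁ = N₂ :=
  summands_eq_of_equal_fibers_general A M r N₁ N₂ h₁ h₂ hfib
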